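/- arXiv:0911.1051 — 3 statements merged into one kernel-verified Lean document; each statement's English description precedes it below -/
import Mathlib

section
/- Let K be a field of characteristic different from 2, L a field extension of K, and u, v ∈ L with u² = q ∈ K and v² = S ∈ K, such that 1, u, v, u·v are linearly independent over K. Let r, Z₁, Z₂ ∈ K with Z₁ ≠ r·Z₂. Then u·v + Z₂ ≠ 0, and the element w = (r·u·v + Z₁)/(u·v + Z₂) cannot be written in the form w = K₁ + u·K₂ with K₁, K₂ ∈ K. Moreover, if Z₁ = r·Z₂ then w does admit such a representation; i.e., w ∈ K + u·K if and only if Z₁ = r·Z₂. -/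
/-- In a field extension `L/K` with `char K ≠ 2`, suppose `u² = q ∈ K`, `v² = S ∈ K`
and `1, u, v, u·v` are linearly independent over `K`. For `r, Z₁, Z₂ ∈ K`, the
denominator `u·v + Z₂` is nonzero, and `(r·u·v + Z₁)/(u·v + Z₂)` can be written as
`K₁ + u·K₂` with `K₁, K₂ ∈ K` if and only if `Z₁ = r·Z₂`. -/
theorem mobius_in_quadratic_subfield_iff {K L : Type*} [Field K] [Field L] [Algebra K L]
    (hchar : ringChar K ≠ 2) (u v : L) (q S : K)
    (hu : u ^ 2 = algebraMap K L q) (hv : v ^ 2 = algebraMap K L S)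
    (hind : LinearIndependent K ![(1 : L), u, v, u * v])
    (r Z₁ Z₂ : K) :
    u * v + algebraMap K L Z₂ ≠ 0 ∧
    ((∃ K₁ K₂ : K,
        (algebraMap K L r * (u * v) + algebraMap K L Z₁) / (u * v + algebraMap K L Z₂) =
          algebraMap K L K₁ + u * algebraMap K L K₂) ↔ Z₁ = r * Z₂) := by
  have hli := Fintype.linearIndependent_iff.mp hind
  have helper : ∀ a b c d : K,
      algebraMap K L a + algebraMap K L b * u + algebraMap K L c * v +
        algebraMap K L d * (u * v) = 0 → a = 0 ∧ b = 0 ∧ c = 0 ∧ d = 0 := by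
    intro a b c d h
    have h0 := hli ![a, b, c, d] (by
      rw [Fin.sum_univ_four]
      simpa [Algebra.smul_def, mul_comm] using h)
    exact ⟨h0 0, h0 1, h0 2, h0 3⟩
  have hne : u * v + algebraMap K L Z₂ ≠ 0 := by
    intro h
    have := (helper Z₂ 0 0 1 (by simpa [add_comm] using h)).2.2.2
    exact one_ne_zero this
  refine ⟨hne, ?_, ?_⟩
  · rintro ⟨K₁, K₂, hw⟩
    rw [div_eq_iff hne] at hw
    have key : algebraMap K L (Z₁ - K₁ * Z₂) + algebraMap K L (-(K₂ * Z₂)) * u +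
        algebraMap K L (-(K₂ * q)) * v + algebraMap K L (r - K₁) * (u * v) = 0 := by
      push_cast [map_sub, map_neg, map_mul]
      linear_combination hw + algebraMap K L K₂ * v * hu
    obtain ⟨h1, h2, h3, h4⟩ := helper _ _ _ _ key
    have hK₁ : r = K₁ := sub_eq_zero.mp h4
    have hZ : Z₁ = K₁ * Z₂ := sub_eq_zero.mp h1
    rw [hZ, ← hK₁]
  · intro hZ
    refine ⟨r, 0, ?_⟩
    rw [div_eq_iff hne, hZ]
    push_cast [map_mul]
    ring
end

section
/- Let K = ℂ(X) be the field of rational functions over ℂ. Let g₂, g₃ ∈ ℂ satisfy g₂³ ≠ 27·g₃², and set q = 4·X³ − g₂·X − g₃ ∈ ℂ[X]. Let S = F₁·X² + F₂·X + F₀ ∈ ℂ[X] with F₁ ≠ 0 and F₂² ≠ 4·F₁·F₀, and suppose q and S are coprime in ℂ[X]. Let L be any field extension of K containing elements u, v with u² = q and v² = S (the images of q, S in K). Then for all Z₁, Z₂ ∈ K with Z₁ ≠ X·Z₂, the element w = (X·u·v + Z₁)/(u·v + Z₂) of L (whose denominator is nonzero) cannot be written as w = K₁ + u·K₂ with K₁,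 K₂ ∈ K. -/
open Polynomial

private lemma not_sq_rat (p : Polynomial ℂ) (hp : ∀ s : Polynomial ℂ, p ≠ s ^ 2)
    (r : RatFunc ℂ) : r ^ 2 ≠ algebraMap (Polynomial ℂ) (RatFunc ℂ) p := by
  intro h
  have hint : IsIntegral (Polynomial ℂ) r := by
    refine ⟨X ^ 2 - C p, monic_X_pow_sub_C p (by norm_num), ?_⟩
    simp [h]
  obtain ⟨s, hs⟩ := IsIntegrallyClosed.isIntegral_iff.mp hint
  apply hp s
  apply IsFractionRing.injective (Polynomial ℂ) (RatFunc ℂ)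
  rw [← h, ← hs, map_pow]

private lemma odd_deg_not_sq (p : Polynomial ℂ) (n : ℕ) (hn : p.natDegree = 2 * n + 1) :
    ∀ s : Polynomial ℂ, p ≠ s ^ 2 := by
  intro s hps
  have hs0 : s ≠ 0 := by rintro rfl; rw [hps] at hn; simp at hn
  rw [hps, natDegree_pow] at hn
  omega

private lemma quad_coeffs (F₁ F₂ F₀ A B D : ℂ)
    (h : C F₁ * X ^ 2 + C F₂ * X + C F₀ = C A * X ^ 2 + C B * X + C D) :
    F₁ = A ∧ F₂ = B ∧ F₀ = D := by
  have h2 := Polynomial.ext_iff.mp h 2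
  have h1 := Polynomial.ext_iff.mp h 1
  have h0 := Polynomial.ext_iff.mp h 0
  simp [coeff_add, coeff_C_mul, coeff_X_pow, coeff_C, coeff_X] at h2 h1 h0
  exact ⟨h2, h1, h0⟩

private lemma quad_not_sq (F₁ F₂ F₀ : ℂ) (hF₁ : F₁ ≠ 0) (hdisc : F₂ ^ 2 ≠ 4 * F₁ * F₀) :
    ∀ s : Polynomial ℂ, C F₁ * X ^ 2 + C F₂ * X + C F₀ ≠ s ^ 2 := by
  intro s h
  have hdeg : (C F₁ * X ^ 2 + C F₂ * X + C F₀).natDegree = 2 := by compute_degree!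
  have hs1 : s.natDegree = 1 := by rw [h, natDegree_pow] at hdeg; omega
  have hrep : s = C (s.coeff 1) * X + C (s.coeff 0) :=
    eq_X_add_C_of_natDegree_le_one (by omega)
  set a := s.coeff 1
  set b := s.coeff 0
  rw [hrep] at h
  have hexp : (C a * X + C b : Polynomial ℂ) ^ 2
      = C (a ^ 2) * X ^ 2 + C (a * b + a * b) * X + C (b ^ 2) := by
    simp only [C_mul, C_pow, C_add]; ring
  rw [hexp] at h
  obtain ⟨e2, e1, e0⟩ := quad_coeffs _ _ _ _ _ _ h
  exact hdisc (by rw [e2, e1, e0]; ring)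

/-- Algebraic model of the non-ellipticity of the solution `dX¹` (formula (2.28)):
over `K = ℂ(X)` with `u² = 4X³ − g₂X − g₃` (nondegenerate) and `v² = S` a
nondegenerate quadratic coprime to `q`, the element `(X·u·v + Z₁)/(u·v + Z₂)`
(with `Z₁ ≠ X·Z₂`) is not of the form `K₁ + u·K₂` with `K₁, K₂ ∈ K`. -/
theorem dX1_not_elliptic (g₂ g₃ F₁ F₂ F₀ : ℂ)
    (hΔ : g₂ ^ 3 ≠ 27 * g₃ ^ 2) (hF₁ : F₁ ≠ 0) (hdisc : F₂ ^ 2 ≠ 4 * F₁ * F₀)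
    (q S : Polynomial ℂ)
    (hq : q = 4 * Polynomial.X ^ 3 - Polynomial.C g₂ * Polynomial.X - Polynomial.C g₃)
    (hS : S = Polynomial.C F₁ * Polynomial.X ^ 2 + Polynomial.C F₂ * Polynomial.X +
      Polynomial.C F₀)
    (hcop : IsCoprime q S)
    (L : Type*) [Field L] [Algebra (RatFunc ℂ) L] (u v : L)
    (hu : u ^ 2 = algebraMap (RatFunc ℂ) L (algebraMap (Polynomial ℂ) (RatFunc ℂ) q))
    (hv : v ^ 2 = algebraMap (RatFunc ℂ) L (algebraMap (Polynomial ℂ) (RatFunc ℂ) S))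
    (Z₁ Z₂ : RatFunc ℂ) (hZ : Z₁ ≠ RatFunc.X * Z₂) :
    u * v + algebraMap (RatFunc ℂ) L Z₂ ≠ 0 ∧
    ¬∃ K₁ K₂ : RatFunc ℂ,
        (algebraMap (RatFunc ℂ) L RatFunc.X * (u * v) + algebraMap (RatFunc ℂ) L Z₁) /
            (u * v + algebraMap (RatFunc ℂ) L Z₂) =
          algebraMap (RatFunc ℂ) L K₁ + u * algebraMap (RatFunc ℂ) L K₂ := by
  have hφinj : Function.Injective (algebraMap (RatFunc ℂ) L) :=
    (algebraMap (RatFunc ℂ) L).injective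
  have hαinj : Function.Injective (algebraMap (Polynomial ℂ) (RatFunc ℂ)) :=
    IsFractionRing.injective _ _
  have hq3 : q.natDegree = 3 := by subst hq; compute_degree!
  have hS2 : S.natDegree = 2 := by subst hS; compute_degree!
  have hq0 : q ≠ 0 := fun h => by simp [h] at hq3
  have hS0 : S ≠ 0 := fun h => by simp [h] at hS2
  have hQns : ∀ r : RatFunc ℂ, r ^ 2 ≠ algebraMap (Polynomial ℂ) (RatFunc ℂ) q :=
    not_sq_rat q (odd_deg_not_sq q 1 hq3)
  have hSns : ∀ r : RatFunc ℂ, r ^ 2 ≠ algebraMap (Polynomial ℂ) (RatFunc ℂ) S := by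
    subst hS; exact not_sq_rat _ (quad_not_sq F₁ F₂ F₀ hF₁ hdisc)
  have hQSns : ∀ r : RatFunc ℂ,
      r ^ 2 ≠ algebraMap (Polynomial ℂ) (RatFunc ℂ) q *
        algebraMap (Polynomial ℂ) (RatFunc ℂ) S := by
    intro r hr
    exact not_sq_rat (q * S) (odd_deg_not_sq _ 2
      (by rw [Polynomial.natDegree_mul hq0 hS0, hq3, hS2])) r (by rw [map_mul]; exact hr)
  set φ : RatFunc ℂ →+* L := (algebraMap (RatFunc ℂ) L : RatFunc ℂ →+* L) with hφdef
  set Q : RatFunc ℂ := algebraMap (Polynomial ℂ) (RatFunc ℂ) q with hQdef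
  set Sr : RatFunc ℂ := algebraMap (Polynomial ℂ) (RatFunc ℂ) S with hSrdef
  have hQ0 : Q ≠ 0 := fun h => hq0 (hαinj (by rw [← hQdef, h, map_zero]))
  -- independence of 1, u over K
  have indep : ∀ a b : RatFunc ℂ, φ a + φ b * u = 0 → a = 0 ∧ b = 0 := by
    intro a b hab
    by_cases hb : b = 0
    · subst hb
      simp only [map_zero, zero_mul, add_zero] at hab
      exact ⟨hφinj (by simpa using hab), rfl⟩
    · exfalso
      have hbne : φ b ≠ 0 := by
        simpa using fun h => hb (hφinj (by simpa using h))
      have hufrac : u = φ (-(a / b)) := by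
        rw [map_neg, map_div₀]
        field_simp
        linear_combination hab
      apply hQns (-(a / b))
      apply hφinj
      rw [map_pow, ← hufrac, hu]
  -- v is not of the form c + d·u
  have vnot : ∀ c d : RatFunc ℂ, v = φ c + φ d * u → False := by
    intro c d hvcd
    have hsq : φ (c ^ 2 + d ^ 2 * Q - Sr) + φ (2 * (c * d)) * u = 0 := by
      simp only [map_add, map_sub, map_mul, map_pow, map_ofNat]
      linear_combination -(v + φ c + φ d * u) * hvcd + hv - (φ d) ^ 2 * hu
    obtain ⟨h1, h2⟩ := indep _ _ hsq
    have h1' : c ^ 2 + d ^ 2 * Q = Sr := by linear_combination h1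
    have h2ne : (2 : RatFunc ℂ) ≠ 0 := by
      intro h
      have h2m : algebraMap (Polynomial ℂ) (RatFunc ℂ) 2 =
          algebraMap (Polynomial ℂ) (RatFunc ℂ) 0 := by rw [map_ofNat, map_zero]; exact h
      have := hαinj h2m
      norm_num at this
    have h2' : c * d = 0 := by
      rcases mul_eq_zero.mp h2 with h | h
      · exact absurd h h2ne
      · exact h
    have hcd : c = 0 ∨ d = 0 := mul_eq_zero.mp h2'
    rcases hcd with hc | hd
    · exact hQSns (d * Q) (by linear_combination Q * h1' - Q * c * hc)
    · exact hSns c (by linear_combination h1' - d * Q * hd)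
  -- denominator nonzero
  have hden : u * v + φ Z₂ ≠ 0 := by
    intro hden
    have hu0 : u ≠ 0 := by
      intro h
      apply hQ0
      apply hφinj
      rw [← hu, h, map_zero]
      ring
    have hφQ : φ Q ≠ 0 := fun h => hQ0 (hφinj (by rw [h, map_zero]))
    apply vnot 0 (-Z₂ / Q)
    rw [map_zero, zero_add, map_div₀, map_neg]
    field_simp
    linear_combination u * hden - v * hu
  refine ⟨hden, ?_⟩
  rintro ⟨K₁, K₂, heq⟩
  rw [div_eq_iff hden] at heq
  set A₁ : RatFunc ℂ := RatFunc.X - K₁ with hA₁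
  set A₀ : RatFunc ℂ := -(Q * K₂) with hA₀
  set B₁ : RatFunc ℂ := K₂ * Z₂ with hB₁
  set B₀ : RatFunc ℂ := K₁ * Z₂ - Z₁ with hB₀
  have claim : (φ A₁ * u + φ A₀) * v = φ B₁ * u + φ B₀ := by
    rw [hA₁, hA₀, hB₁, hB₀]
    simp only [map_sub, map_mul, map_neg]
    linear_combination heq + (v * φ K₂) * hu
  by_cases hA : A₁ = 0 ∧ A₀ = 0
  · obtain ⟨hA1, hA0⟩ := hA
    have hz : φ B₀ + φ B₁ * u = 0 := by
      rw [hA1, hA0] at claim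
      simp only [map_zero, zero_mul, add_zero, zero_add] at claim
      linear_combination -claim
    obtain ⟨hB0z, hB1z⟩ := indep B₀ B₁ hz
    apply hZ
    have hK₁ : K₁ = RatFunc.X := by linear_combination -hA1
    rw [← hK₁]
    linear_combination -hB0z
  · have hAne : φ A₁ * u + φ A₀ ≠ 0 := by
      intro h
      obtain ⟨h0, h1⟩ := indep A₀ A₁ (by linear_combination h)
      exact hA ⟨h1, h0⟩
    set N : RatFunc ℂ := A₁ ^ 2 * Q - A₀ ^ 2 with hN
    have hN0 : N ≠ 0 := by
      intro h
      by_cases hA1 : A₁ = 0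
      · have hA0 : A₀ = 0 := by
          have h' : A₀ ^ 2 = 0 := by rw [hN] at h; linear_combination -h + Q * A₁ * hA1
          exact pow_eq_zero_iff (by norm_num) |>.mp h'
        exact hA ⟨hA1, hA0⟩
      · apply hQns (A₀ / A₁)
        rw [div_pow, div_eq_iff (pow_ne_zero 2 hA1)]
        rw [hN] at h
        linear_combination -h
    have hNv : φ N * v = φ (B₁ * A₁ * Q - B₀ * A₀) + φ (B₀ * A₁ - B₁ * A₀) * u := by
      rw [hN]
      simp only [map_sub, map_mul, map_pow]
      linear_combination (φ A₁ * u - φ A₀) * claim + (φ B₁ * φ A₁ - (φ A₁) ^ 2 * v) * hu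
    apply vnot ((B₁ * A₁ * Q - B₀ * A₀) / N) ((B₀ * A₁ - B₁ * A₀) / N)
    have hφN : φ N ≠ 0 := fun h => hN0 (hφinj (by rw [h, map_zero]))
    rw [map_div₀, map_div₀]
    field_simp
    simp only [map_sub, map_mul] at hNv ⊢
    linear_combination hNv
end

section
/- Let K be a field of characteristic different from 2, L a field extension of K, and u, v ∈ L with u² = q ∈ K and v² = S ∈ K, such that 1, u, v, u·v are linearly independent over K. Let r, P, Q ∈ K. Then Q·v + u ≠ 0, and the element w = (P·v + r·u)/(Q·v + u) can be written in the form w = K₁ + u·K₂ with K₁, K₂ ∈ K if and only if P = r·Q. -/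
/-- In a field extension `L/K` with `char K ≠ 2`, suppose `u² = q ∈ K`, `v² = S ∈ K`
and `1, u, v, u·v` are linearly independent over `K`. For `r, P, Q ∈ K`, the
denominator `Q·v + u` is nonzero, and `(P·v + r·u)/(Q·v + u)` can be written as
`K₁ + u·K₂` with `K₁, K₂ ∈ K` if and only if `P = r·Q`. -/
theorem embedding_solution_in_quadratic_subfield_iff {K L : Type*} [Field K] [Field L]
    [Algebra K L] (hchar : ringChar K ≠ 2) (u v : L) (q S : K)
    (hu : u ^ 2 = algebraMap K L q) (hv : v ^ 2 = algebraMap K L S)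
    (hind : LinearIndependent K ![(1 : L), u, v, u * v])
    (r P Q : K) :
    algebraMap K L Q * v + u ≠ 0 ∧
    ((∃ K₁ K₂ : K,
        (algebraMap K L P * v + algebraMap K L r * u) / (algebraMap K L Q * v + u) =
          algebraMap K L K₁ + u * algebraMap K L K₂) ↔ P = r * Q) := by
  have hli := Fintype.linearIndependent_iff.mp hind
  have key : ∀ c0 c1 c2 c3 : K,
      algebraMap K L c0 + algebraMap K L c1 * u + algebraMap K L c2 * v
        + algebraMap K L c3 * (u * v) = 0 → c0 = 0 ∧ c1 = 0 ∧ c2 = 0 ∧ c3 = 0 := by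
    intro c0 c1 c2 c3 h
    have h2 : ∀ i, (![c0, c1, c2, c3] : Fin 4 → K) i = 0 := by
      apply hli
      simp only [Fin.sum_univ_four, Matrix.cons_val_zero, Matrix.cons_val_one,
        Matrix.head_cons, Matrix.cons_val_two, Matrix.tail_cons, Matrix.cons_val_three,
        Algebra.smul_def]
      linear_combination h
    exact ⟨h2 0, h2 1, h2 2, h2 3⟩
  have hden : algebraMap K L Q * v + u ≠ 0 := by
    intro h
    obtain ⟨-, h1, -, -⟩ := key 0 1 Q 0 (by
      simp only [map_zero, map_one, zero_add, one_mul, zero_mul, add_zero]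
      linear_combination h)
    exact one_ne_zero h1
  refine ⟨hden, ?_, ?_⟩
  · rintro ⟨K₁, K₂, h⟩
    rw [div_eq_iff hden] at h
    obtain ⟨-, h1, h2, -⟩ := key (K₂ * q) (K₁ - r) (K₁ * Q - P) (K₂ * Q) (by
      simp only [map_mul, map_sub]
      linear_combination -h - algebraMap K L K₂ * hu)
    have hK₁ : K₁ = r := sub_eq_zero.mp h1
    have : K₁ * Q = P := sub_eq_zero.mp h2
    rw [hK₁] at this
    exact this.symm
  · intro hPQ
    refine ⟨r, 0, ?_⟩
    rw [div_eq_iff hden, hPQ]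
    push_cast [map_mul, map_zero]
    ring
end
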